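/- arXiv:2303.10205 — 2 statements merged into one kernel-verified Lean document; each statement's English description precedes it below -/
import Mathlib

section
/- Let X be a locally compact separable metric space that is homogeneous, i.e., for every two points x, y ∈ X there exists a homeomorphism h of X onto itself with h(x) = y. Let ρ be a metric on the one-point compactification of X that induces its topology (points of X being regarded as points of the one-point compactification). Then for every point a ∈ X and every ε > 0 there exists δ > 0 such that for every x ∈ X with ρ(x, a) < δ there exists a homeomorphism h : X → X with h(a) = x and ρ(h(y), y) < ε for all y ∈ X. -/
open Set Topology OnePoint

section BaireMachinery

variable {Z : Type*} [TopologicalSpace Z]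


variable {Z : Type*} [TopologicalSpace Z]

/-- The "Baire envelope" of a set: points near which `T` is everywhere non-meager. -/
def baireD (T : Set Z) : Set Z :=
  {x | ∀ U : Set Z, IsOpen U → x ∈ U → ¬ IsMeagre (T ∩ U)}

lemma isClosed_baireD (T : Set Z) : IsClosed (baireD T) := by
  rw [← isOpen_compl_iff]
  rw [isOpen_iff_forall_mem_open]
  intro x hx
  simp only [baireD, mem_compl_iff, mem_setOf_eq, not_forall] at hx
  obtain ⟨U, hU, hxU, hm⟩ := hx
  refine ⟨U, ?_, hU, hxU⟩
  intro y hy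
  simp only [baireD, mem_compl_iff, mem_setOf_eq, not_forall]
  exact ⟨U, hU, hy, by simpa using hm⟩

lemma isMeagre_diff_baireD [SecondCountableTopology Z] (T : Set Z) :
    IsMeagre (T \ baireD T) := by
  obtain ⟨b, hbc, -, hb⟩ := TopologicalSpace.exists_countable_basis Z
  have : T \ baireD T ⊆ ⋃ U ∈ {U ∈ b | IsMeagre (T ∩ U)}, T ∩ U := by
    intro x hx
    obtain ⟨hxT, hxD⟩ := hx
    simp only [baireD, mem_setOf_eq, not_forall] at hxD
    obtain ⟨U, hU, hxU, hm⟩ := hxD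
    rw [not_not] at hm
    obtain ⟨V, hVb, hxV, hVU⟩ := hb.exists_subset_of_mem_open hxU hU
    exact mem_biUnion ⟨hVb, (hm.mono (inter_subset_inter_right _ hVU))⟩ ⟨hxT, hxV⟩
  refine IsMeagre.mono this ?_
  exact isMeagre_biUnion (hbc.mono (sep_subset _ _)) (fun U hU => hU.2)

lemma baireD_subset_closure {T O M : Set Z} (hO : IsOpen O) (hM : IsMeagre M)
    (hTOM : T ⊆ O ∪ M) : baireD T ⊆ closure O := by
  intro x hx
  rw [mem_closure_iff]
  intro U hU hxU
  by_contra hOU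
  rw [not_nonempty_iff_eq_empty] at hOU
  refine hx U hU hxU ?_
  have : T ∩ U ⊆ M := by
    intro y ⟨hyT, hyU⟩
    rcases hTOM hyT with hyO | hyM
    · exact absurd (show y ∈ U ∩ O from ⟨hyU, hyO⟩) (by rw [hOU]; exact notMem_empty y)
    · exact hyM
  exact hM.mono this

/-- Frontier of an open set is meagre. -/
lemma isMeagre_closure_diff {O : Set Z} (hO : IsOpen O) : IsMeagre (closure O \ O) := by
  have : IsNowhereDense (closure O \ O) := by
    have hcl : IsClosed (closure O \ O) := isClosed_closure.sdiff hO
    rw [hcl.isNowhereDense_iff]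
    rw [eq_empty_iff_forall_notMem]
    intro x hx
    have hxO : x ∈ closure O \ O := interior_subset hx
    have : x ∈ closure O := hxO.1
    have hint : IsOpen (interior (closure O \ O)) := isOpen_interior
    have hsub : interior (closure O \ O) ⊆ (closure O)ᶜ ∪ Oᶜ := by
      intro y hy; right; exact (interior_subset hy).2
    -- interior (closure O \ O) is an open set inside closure O, disjoint from O
    have : (interior (closure O \ O) ∩ O).Nonempty := by
      have hxcl : x ∈ closure O := hxO.1
      rw [mem_closure_iff] at hxcl
      exact hxcl _ hint hx
    obtain ⟨y, hy1, hy2⟩ := this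
    exact absurd hy2 (interior_subset hy1).2
  rw [isMeagre_iff_countable_union_isNowhereDense]
  exact ⟨{closure O \ O}, by simpa using this, countable_singleton _, by simp⟩


lemma IsNowhereDense.isMeagre' {s : Set Z} (hs : IsNowhereDense s) : IsMeagre s := by
  rw [isMeagre_iff_countable_union_isNowhereDense]
  exact ⟨{s}, by simpa using hs, countable_singleton _, by simp⟩

lemma IsMeagre.union' {s t : Set Z} (hs : IsMeagre s) (ht : IsMeagre t) :
    IsMeagre (s ∪ t) := by
  rw [IsMeagre, compl_union]
  exact Filter.inter_mem hs ht

lemma baireD_subset_closure_self (T : Set Z) : baireD T ⊆ closure T := by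
  intro x hx
  rw [mem_closure_iff]
  intro U hU hxU
  by_contra h
  rw [not_nonempty_iff_eq_empty] at h
  exact hx U hU hxU (by rw [inter_comm] at h; rw [h]; exact IsMeagre.empty)

lemma isMeagre_diff_interior {D : Set Z} (hD : IsClosed D) :
    IsMeagre (D \ interior D) := by
  refine IsNowhereDense.isMeagre' ?_
  rw [(hD.sdiff isOpen_interior).isNowhereDense_iff]
  rw [eq_empty_iff_forall_notMem]
  intro x hx
  have h1 : interior (D \ interior D) ⊆ interior D :=
    interior_mono (diff_subset)
  exact (interior_subset hx).2 (h1 hx)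

lemma isMeagre_image_homeomorph {h : Z ≃ₜ Z} {s : Set Z} (hs : IsMeagre s) :
    IsMeagre (h '' s) := by
  have hmap := h.residual_map_eq
  rw [IsMeagre] at hs ⊢
  rw [← hmap, Filter.mem_map]
  have : h ⁻¹' (h '' s)ᶜ = sᶜ := by
    ext x; simp [h.injective.mem_set_image]
  rwa [this]

lemma not_isMeagre_univ [BaireSpace Z] [Nonempty Z] : ¬ IsMeagre (univ : Set Z) := by
  intro h
  rw [IsMeagre, compl_univ] at h
  rcases (dense_of_mem_residual h).nonempty with ⟨x, hx⟩
  exact hx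


/-- Continuous images of Polish spaces are "almost open": the Baire envelope of the
range differs from the range by a meagre set. -/
lemma isMeagre_baireD_diff_range {P : Type*} [MetricSpace P] [CompleteSpace P]
    [SecondCountableTopology P] {Z : Type*} [MetricSpace Z] [SecondCountableTopology Z]
    (f : P → Z) (hf : Continuous f) :
    IsMeagre (baireD (range f) \ range f) := by
  rcases isEmpty_or_nonempty P with hP | hP
  · have : range f = ∅ := range_eq_empty f
    rw [this]
    have : baireD (∅ : Set Z) = ∅ := by
      rw [eq_empty_iff_forall_notMem]
      intro x hx
      exact hx univ isOpen_univ (mem_univ x) (by simpa using IsMeagre.empty)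
    rw [this]; simpa using IsMeagre.empty
  -- dense sequence in P
  have hsep : TopologicalSpace.SeparableSpace P := inferInstance
  set u : ℕ → P := TopologicalSpace.denseSeq P with hu
  have hdense : DenseRange u := TopologicalSpace.denseRange_denseSeq P
  -- the Suslin scheme
  let C : List ℕ → Set P := fun s =>
    s.rec univ (fun i t Ct => Ct ∩ Metric.closedBall (u i) ((1/2) ^ (t.length + 1)))
  have hCnil : C [] = univ := rfl
  have hCcons : ∀ i t, C (i :: t) = C t ∩ Metric.closedBall (u i) ((1/2) ^ (t.length + 1)) :=
    fun i t => rfl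
  have hCclosed : ∀ s, IsClosed (C s) := by
    intro s
    induction s with
    | nil => exact isClosed_univ
    | cons i t ih => exact ih.inter Metric.isClosed_closedBall
  have hCcover : ∀ s, C s ⊆ ⋃ i, C (i :: s) := by
    intro s p hp
    have : ∃ i, dist p (u i) < (1/2) ^ (s.length + 1) := by
      have := Metric.denseRange_iff.1 hdense p ((1/2) ^ (s.length + 1)) (by positivity)
      exact this
    obtain ⟨i, hi⟩ := this
    exact mem_iUnion.2 ⟨i, hp, Metric.mem_closedBall.2 hi.le⟩
  have hCsub : ∀ i t, C (i :: t) ⊆ C t := fun i t => inter_subset_left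
  have hCdiam : ∀ i t, ∀ p ∈ C (i :: t), ∀ q ∈ C (i :: t),
      dist p q ≤ (1/2) ^ t.length := by
    intro i t p hp q hq
    have h1 : dist p (u i) ≤ (1/2) ^ (t.length + 1) := hp.2
    have h2 : dist q (u i) ≤ (1/2) ^ (t.length + 1) := hq.2
    calc dist p q ≤ dist p (u i) + dist q (u i) := dist_triangle_right _ _ _
    _ ≤ (1/2) ^ (t.length + 1) + (1/2) ^ (t.length + 1) := add_le_add h1 h2
    _ = (1/2) ^ t.length := by ring
  -- notation
  set S : List ℕ → Set Z := fun s => f '' C s with hS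
  -- the meagre exceptional set
  set M : Set Z := ⋃ s ∈ (univ : Set (List ℕ)),
      ((S s \ baireD (S s)) ∪ (baireD (S s) \ ⋃ i, baireD (S (i :: s)))) with hM
  have hMmeagre : IsMeagre M := by
    refine isMeagre_biUnion countable_univ ?_
    intro s _
    refine IsMeagre.union' (isMeagre_diff_baireD _) ?_
    -- second piece
    set O : Set Z := ⋃ i, interior (baireD (S (i :: s))) with hO
    have hOopen : IsOpen O := isOpen_iUnion fun i => isOpen_interior
    set N : Set Z := (⋃ i ∈ (univ : Set ℕ), (baireD (S (i :: s)) \ interior (baireD (S (i :: s)))))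
        ∪ (⋃ i ∈ (univ : Set ℕ), (S (i :: s) \ baireD (S (i :: s)))) with hN
    have hNmeagre : IsMeagre N := by
      refine IsMeagre.union' ?_ ?_
      · exact isMeagre_biUnion countable_univ fun i _ => isMeagre_diff_interior (isClosed_baireD _)
      · exact isMeagre_biUnion countable_univ fun i _ => isMeagre_diff_baireD _
    have hcov : S s ⊆ O ∪ N := by
      intro z hz
      obtain ⟨p, hp, rfl⟩ := hz
      obtain ⟨i, hpi⟩ := mem_iUnion.1 (hCcover s hp)
      by_cases h1 : f p ∈ baireD (S (i :: s))
      · by_cases h2 : f p ∈ interior (baireD (S (i :: s)))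
        · exact Or.inl (mem_iUnion.2 ⟨i, h2⟩)
        · exact Or.inr (Or.inl (mem_biUnion (mem_univ i) ⟨h1, h2⟩))
      · exact Or.inr (Or.inr (mem_biUnion (mem_univ i) ⟨⟨p, hpi, rfl⟩, h1⟩))
    have hsub : baireD (S s) ⊆ closure O := baireD_subset_closure hOopen hNmeagre hcov
    have : baireD (S s) \ (⋃ i, baireD (S (i :: s))) ⊆ closure O \ O := by
      intro z hz
      refine ⟨hsub hz.1, ?_⟩
      intro hzO
      obtain ⟨i, hi⟩ := mem_iUnion.1 hzO
      exact hz.2 (mem_iUnion.2 ⟨i, interior_subset hi⟩)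
    exact (isMeagre_closure_diff hOopen).mono this
  -- main claim
  refine hMmeagre.mono ?_
  intro x hx
  obtain ⟨hxD, hxR⟩ := hx
  by_contra hxM
  -- build the branch
  have step : ∀ s : List ℕ, x ∈ baireD (S s) → ∃ i, x ∈ baireD (S (i :: s)) := by
    intro s hs
    by_contra h
    push_neg at h
    refine hxM (mem_biUnion (mem_univ s) (Or.inr ⟨hs, ?_⟩))
    intro hmem
    obtain ⟨i, hi⟩ := mem_iUnion.1 hmem
    exact h i hi
  have hx0 : x ∈ baireD (S []) := by
    have h0 : S [] = range f := by
      show f '' C [] = range f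
      rw [hCnil, image_univ]
    rwa [h0]

  let F : ℕ → {s : List ℕ // x ∈ baireD (S s)} := fun n =>
    n.rec ⟨[], hx0⟩ (fun _ prev =>
      ⟨(step prev.1 prev.2).choose :: prev.1, (step prev.1 prev.2).choose_spec⟩)
  have hFsucc : ∀ n, ∃ i, (F (n+1)).1 = i :: (F n).1 := fun n => ⟨_, rfl⟩
  have hFlen : ∀ n, (F n).1.length = n := by
    intro n
    induction n with
    | zero => rfl
    | succ n ih =>
      obtain ⟨i, hi⟩ := hFsucc n
      rw [hi]; simp [ih]
  -- nonemptiness of the pieces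
  have hCne : ∀ n, (C (F n).1).Nonempty := by
    intro n
    by_contra h
    rw [not_nonempty_iff_eq_empty] at h
    have : S (F n).1 = ∅ := by
      show f '' C (F n).1 = ∅
      rw [h, image_empty]
    have := (F n).2
    refine this univ isOpen_univ (mem_univ x) ?_
    rw [‹S (F n).1 = ∅›]
    simpa using IsMeagre.empty
  choose p hp using hCne
  -- p is Cauchy
  have hnested : ∀ n m, n ≤ m → C (F m).1 ⊆ C (F n).1 := by
    intro n m hnm
    induction m with
    | zero => rw [Nat.le_zero.1 hnm]
    | succ m ih =>
      rcases Nat.lt_or_ge n (m+1) with h | h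
      · obtain ⟨i, hi⟩ := hFsucc m
        rw [hi]
        exact (hCsub i _).trans (ih (Nat.lt_succ_iff.1 h))
      · rw [Nat.le_antisymm hnm h]
  have hdistbound : ∀ n, ∀ q ∈ C (F (n+1)).1, ∀ q' ∈ C (F (n+1)).1,
      dist q q' ≤ (1/2) ^ n := by
    intro n q hq q' hq'
    obtain ⟨i, hi⟩ := hFsucc n
    rw [hi] at hq hq'
    have := hCdiam i (F n).1 q hq q' hq'
    rwa [hFlen n] at this
  have hcauchy : CauchySeq p := by
    rw [Metric.cauchySeq_iff]
    intro ε hεp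
    obtain ⟨N, hN⟩ := exists_pow_lt_of_lt_one hεp (by norm_num : (1:ℝ)/2 < 1)
    refine ⟨N + 1, fun m hm k hk => ?_⟩
    have h1 : p m ∈ C (F (N+1)).1 := hnested (N+1) m hm (hp m)
    have h2 : p k ∈ C (F (N+1)).1 := hnested (N+1) k hk (hp k)
    exact lt_of_le_of_lt (hdistbound N _ h1 _ h2) hN
  obtain ⟨q, hq⟩ := cauchySeq_tendsto_of_complete hcauchy
  have hqC : ∀ n, q ∈ C (F n).1 := by
    intro n
    refine (hCclosed (F n).1).mem_of_tendsto hq ?_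
    filter_upwards [Filter.eventually_ge_atTop n] with m hm
    exact hnested n m hm (hp m)
  refine hxR ⟨q, ?_⟩
  -- f q = x
  have key : ∀ ε : ℝ, 0 < ε → dist x (f q) ≤ ε := by
    intro ε hεp
    obtain ⟨δ, hδ, hball⟩ := Metric.continuousAt_iff.1 (hf.continuousAt (x := q)) ε hεp
    obtain ⟨N, hN⟩ := exists_pow_lt_of_lt_one hδ (by norm_num : (1:ℝ)/2 < 1)
    have hsubball : S (F (N+1)).1 ⊆ Metric.ball (f q) ε := by
      rintro _ ⟨w, hw, rfl⟩
      have : dist w q ≤ (1/2)^N := hdistbound N w hw q (hqC (N+1))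
      exact hball (lt_of_le_of_lt this hN)
    have : x ∈ closure (S (F (N+1)).1) := baireD_subset_closure_self _ (F (N+1)).2
    have : x ∈ closure (Metric.ball (f q) ε) := closure_mono hsubball this
    have := Metric.closure_ball_subset_closedBall this
    simpa [dist_comm] using this
  have : dist x (f q) ≤ 0 := le_of_forall_gt_imp_ge_of_dense (by
    intro ε hε
    exact key ε hε)
  have : x = f q := by
    have := le_antisymm this dist_nonneg
    exact (dist_eq_zero.1 this)
  exact this.symm

end BaireMachinery


theorem effros_aux {W : Type*} [MetricSpace W] [CompactSpace W] [SecondCountableTopology W]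
    {X : Type*} [MetricSpace X] [BaireSpace X] [Nonempty X] [SecondCountableTopology X]
    (pt : W) (j : X → W) (hemb : IsInducing j) (hjinj : Function.Injective j)
    (hpt : pt ∉ Set.range j)
    (hcover : ∀ w : W, w = pt ∨ w ∈ Set.range j)
    (E : (X ≃ₜ X) → (W ≃ₜ W))
    (hE : ∀ h x, E h (j x) = j (h x)) (hEpt : ∀ h, E h pt = pt)
    (htrans : ∀ x y : X, ∃ h : X ≃ₜ X, h x = y)
    (a : X) (ε : ℝ) (hε : 0 < ε) :
    ∃ δ > 0, ∀ x : X, dist (j x) (j a) < δ →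
      ∃ h : X ≃ₜ X, h a = x ∧ ∀ y : X, dist (j (h y)) (j y) < ε := by
  classical
  -- basic facts about the extension E
  have hEinv : ∀ (h : X ≃ₜ X) (w : W), E h.symm (E h w) = w := by
    intro h w
    rcases hcover w with rfl | ⟨x, rfl⟩
    · rw [hEpt, hEpt]
    · rw [hE, hE, Homeomorph.symm_apply_apply]
  have hEinv' : ∀ (h : X ≃ₜ X) (w : W), E h (E h.symm w) = w := by
    intro h w
    have := hEinv h.symm w
    rwa [Homeomorph.symm_symm] at this
  have hEcomp : ∀ (g h : X ≃ₜ X) (w : W), E (g.trans h) w = E h (E g w) := by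
    intro g h w
    rcases hcover w with rfl | ⟨x, rfl⟩
    · rw [hEpt, hEpt, hEpt]
    · rw [hE, hE, hE]; rfl
  -- the "moved distance at most η" sets
  set Eset : ℝ → X → Set X := fun η z =>
    {x : X | ∃ h : X ≃ₜ X, (∀ w, dist (E h w) w ≤ η) ∧ h z = x} with hEset
  -- move bound for inverses
  have hMvSymm : ∀ (h : X ≃ₜ X) (η : ℝ), (∀ w, dist (E h w) w ≤ η) →
      (∀ w, dist (E h.symm w) w ≤ η) := by
    intro h η hm w
    have h1 : E h (E h.symm w) = w := hEinv' h w
    calc dist (E h.symm w) w = dist (E h (E h.symm w)) (E h.symm w) := by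
          rw [h1]; exact dist_comm _ _
    _ ≤ η := hm _
  -- countable family of homeomorphisms, dense in sup metric among extensions
  set R : Set C(W, W) := {F | ∃ h : X ≃ₜ X, F = ⟨E h, (E h).continuous⟩} with hR
  obtain ⟨D, hDc, hDd⟩ := TopologicalSpace.exists_countable_dense ↥R
  have hΦ : ∀ d : ↥R, ∃ h : X ≃ₜ X, (d : C(W, W)) = ⟨E h, (E h).continuous⟩ := fun d => d.2
  choose Φ hΦspec using hΦ
  -- Lemma 1 : Eset η z is non-meagre
  have hnonmeagre : ∀ (η : ℝ), 0 < η → ∀ z : X, ¬ IsMeagre (Eset η z) := by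
    intro η hη z hmeagre
    have hcov : (univ : Set X) ⊆ ⋃ d ∈ D, ((Φ d).symm '' Eset η z) := by
      intro x _
      obtain ⟨g, hg⟩ := htrans z x
      -- find d close to the extension of g.symm
      have hFg : (⟨E g.symm, (E g.symm).continuous⟩ : C(W,W)) ∈ R := ⟨g.symm, rfl⟩
      have : (⟨(⟨E g.symm, (E g.symm).continuous⟩ : C(W,W)), hFg⟩ : ↥R) ∈ closure D :=
        hDd _
      rw [Metric.mem_closure_iff] at this
      obtain ⟨d, hdD, hdist⟩ := this η hη
      have hdist' : ∀ w, dist ((d : C(W,W)) w) (E g.symm w) < η := by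
        intro w
        have hb := ContinuousMap.dist_apply_le_dist
          (f := (d : C(W,W))) (g := (⟨E g.symm, (E g.symm).continuous⟩ : C(W,W))) w
        rw [Subtype.dist_eq, dist_comm] at hdist
        exact lt_of_le_of_lt hb hdist
      set v : X ≃ₜ X := g.trans (Φ d) with hv
      have hmv : ∀ w, dist (E v w) w ≤ η := by
        intro w
        have h1 : E v w = E (Φ d) (E g w) := hEcomp g (Φ d) w
        have h2 : E g.symm (E g w) = w := hEinv g w
        have h3 : (d : C(W,W)) (E g w) = E (Φ d) (E g w) := by rw [hΦspec d]; rfl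
        refine le_of_lt ?_
        calc dist (E v w) w = dist ((d : C(W,W)) (E g w)) (E g.symm (E g w)) := by
              rw [h1, ← h3, h2]
        _ < η := hdist' _
      refine mem_biUnion hdD ⟨v z, ⟨v, hmv, rfl⟩, ?_⟩
      rw [hv]
      show (Φ d).symm ((Φ d) (g z)) = x
      rw [Homeomorph.symm_apply_apply, hg]
    refine not_isMeagre_univ (IsMeagre.mono hcov ?_)
    exact isMeagre_biUnion hDc (fun d _ => isMeagre_image_homeomorph hmeagre)
  -- extraction of points of X from W
  have hex : ∀ w : W, w ∈ range j → ∃ x : X, j x = w := fun w hw => hw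
  set toX : W → X := fun w => if h : w ∈ range j then h.choose else Classical.arbitrary X
    with htoXdef
  have htoX : ∀ w (h : w ∈ range j), j (toX w) = w := by
    intro w h
    simp only [htoXdef, dif_pos h]
    exact h.choose_spec
  have htoXj : ∀ x : X, toX (j x) = x := by
    intro x
    exact hjinj (htoX (j x) ⟨x, rfl⟩)
  -- Lemma 2 : the envelope of Eset η z differs from it by a meagre set
  have hBP : ∀ (η : ℝ) (z : X), IsMeagre (baireD (Eset η z) \ Eset η z) := by
    intro η z
    set Vc : Set (C(W,W) × C(W,W)) := {q | (∀ w, q.1 (q.2 w) = w) ∧ (∀ w, q.2 (q.1 w) = w) ∧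
        q.1 pt = pt ∧ (∀ w, dist (q.1 w) w ≤ η)} with hVc
    have hVclosed : IsClosed Vc := by
      have h1 : IsClosed {q : C(W,W) × C(W,W) | ∀ w, q.1 (q.2 w) = w} := by
        have he : {q : C(W,W) × C(W,W) | ∀ w, q.1 (q.2 w) = w} =
            ⋂ w, {q : C(W,W) × C(W,W) | q.1 (q.2 w) = w} := by
          ext q; simp [mem_iInter]
        rw [he]
        refine isClosed_iInter fun w => isClosed_eq ?_ continuous_const
        exact continuous_eval.comp
          (continuous_fst.prodMk ((continuous_eval_const w).comp continuous_snd))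
      have h2 : IsClosed {q : C(W,W) × C(W,W) | ∀ w, q.2 (q.1 w) = w} := by
        have he : {q : C(W,W) × C(W,W) | ∀ w, q.2 (q.1 w) = w} =
            ⋂ w, {q : C(W,W) × C(W,W) | q.2 (q.1 w) = w} := by
          ext q; simp [mem_iInter]
        rw [he]
        refine isClosed_iInter fun w => isClosed_eq ?_ continuous_const
        exact continuous_eval.comp
          (continuous_snd.prodMk ((continuous_eval_const w).comp continuous_fst))
      have h3 : IsClosed {q : C(W,W) × C(W,W) | q.1 pt = pt} :=
        isClosed_eq ((continuous_eval_const pt).comp continuous_fst) continuous_const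
      have h4 : IsClosed {q : C(W,W) × C(W,W) | ∀ w, dist (q.1 w) w ≤ η} := by
        have he : {q : C(W,W) × C(W,W) | ∀ w, dist (q.1 w) w ≤ η} =
            ⋂ w, {q : C(W,W) × C(W,W) | dist (q.1 w) w ≤ η} := by
          ext q; simp [mem_iInter]
        rw [he]
        refine isClosed_iInter fun w => isClosed_le ?_ continuous_const
        exact (((continuous_eval_const w).comp continuous_fst)).dist continuous_const
      have : Vc = {q : C(W,W) × C(W,W) | ∀ w, q.1 (q.2 w) = w} ∩
          ({q | ∀ w, q.2 (q.1 w) = w} ∩ ({q | q.1 pt = pt} ∩ {q | ∀ w, dist (q.1 w) w ≤ η})) := by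
        ext q; simp only [hVc, mem_setOf_eq, mem_inter_iff]
      rw [this]
      exact h1.inter (h2.inter (h3.inter h4))
    haveI : CompleteSpace ↥Vc := hVclosed.completeSpace_coe
    -- each element of Vc restricts to a homeomorphism of X
    have hq1inj : ∀ q : ↥Vc, Function.Injective (q : C(W,W) × C(W,W)).1 := by
      intro q w1 w2 hw
      have := q.2.2.1
      rw [← this w1, ← this w2, hw]
    have hq2pt : ∀ q : ↥Vc, (q : C(W,W) × C(W,W)).2 pt = pt := by
      intro q
      have h1 := q.2.2.1 pt
      rw [q.2.2.2.1] at h1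
      exact h1
    have hq2inj : ∀ q : ↥Vc, Function.Injective (q : C(W,W) × C(W,W)).2 := by
      intro q w1 w2 hw
      have := q.2.1
      rw [← this w1, ← this w2, hw]
    have hq1mem : ∀ (q : ↥Vc) (x : X), (q : C(W,W) × C(W,W)).1 (j x) ∈ range j := by
      intro q x
      rcases hcover ((q : C(W,W) × C(W,W)).1 (j x)) with h | h
      · exfalso
        have hjx : j x = pt := hq1inj q (by rw [h, q.2.2.2.1])
        exact hpt ⟨x, hjx⟩
      · exact h
    have hq2mem : ∀ (q : ↥Vc) (x : X), (q : C(W,W) × C(W,W)).2 (j x) ∈ range j := by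
      intro q x
      rcases hcover ((q : C(W,W) × C(W,W)).2 (j x)) with h | h
      · exfalso
        have hjx : j x = pt := hq2inj q (by rw [h, hq2pt q])
        exact hpt ⟨x, hjx⟩
      · exact h
    have hjf : ∀ (q : ↥Vc) (x : X),
        j (toX ((q : C(W,W) × C(W,W)).1 (j x))) = (q : C(W,W) × C(W,W)).1 (j x) :=
      fun q x => htoX _ (hq1mem q x)
    have hjg : ∀ (q : ↥Vc) (x : X),
        j (toX ((q : C(W,W) × C(W,W)).2 (j x))) = (q : C(W,W) × C(W,W)).2 (j x) :=
      fun q x => htoX _ (hq2mem q x)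
    set homeoX : ↥Vc → X ≃ₜ X := fun q =>
      { toFun := fun x => toX ((q : C(W,W) × C(W,W)).1 (j x))
        invFun := fun x => toX ((q : C(W,W) × C(W,W)).2 (j x))
        left_inv := by
          intro x
          apply hjinj
          rw [hjg q, hjf q]
          exact q.2.2.1 (j x)
        right_inv := by
          intro x
          apply hjinj
          rw [hjf q, hjg q]
          exact q.2.1 (j x)
        continuous_toFun := by
          rw [hemb.continuous_iff]
          have : (j ∘ fun x => toX ((q : C(W,W) × C(W,W)).1 (j x))) =
              fun x => (q : C(W,W) × C(W,W)).1 (j x) := funext fun x => hjf q x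
          rw [this]
          exact (q : C(W,W) × C(W,W)).1.continuous.comp hemb.continuous
        continuous_invFun := by
          rw [hemb.continuous_iff]
          have : (j ∘ fun x => toX ((q : C(W,W) × C(W,W)).2 (j x))) =
              fun x => (q : C(W,W) × C(W,W)).2 (j x) := funext fun x => hjg q x
          rw [this]
          exact (q : C(W,W) × C(W,W)).2.continuous.comp hemb.continuous } with hhomeoX
    have hEhq : ∀ (q : ↥Vc) (w : W), E (homeoX q) w = (q : C(W,W) × C(W,W)).1 w := by
      intro q w
      rcases hcover w with rfl | ⟨x, rfl⟩
      · rw [hEpt, q.2.2.2.1]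
      · rw [hE]
        exact hjf q x
    set φ : ↥Vc → X := fun q => homeoX q z with hφdef
    have hφcont : Continuous φ := by
      rw [hemb.continuous_iff]
      have : (j ∘ φ) = fun q : ↥Vc => (q : C(W,W) × C(W,W)).1 (j z) := by
        funext q
        exact hjf q z
      rw [this]
      exact (continuous_eval_const (j z)).comp (continuous_fst.comp continuous_subtype_val)
    have hrange : range φ = Eset η z := by
      apply subset_antisymm
      · rintro _ ⟨q, rfl⟩
        refine ⟨homeoX q, fun w => ?_, rfl⟩
        rw [hEhq q w]
        exact q.2.2.2.2 w
      · rintro x ⟨h, hm, rfl⟩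
        have hmem : ((⟨E h, (E h).continuous⟩ : C(W,W)), (⟨E h.symm, (E h.symm).continuous⟩ : C(W,W))) ∈ Vc := by
          refine ⟨fun w => hEinv' h w, fun w => hEinv h w, hEpt h, hm⟩
        refine ⟨⟨_, hmem⟩, ?_⟩
        show toX (E h (j z)) = h z
        rw [hE, htoXj]
    have := isMeagre_baireD_diff_range φ hφcont
    rwa [hrange] at this
  -- ===== Final assembly =====
  have hη4 : (0:ℝ) < ε/4 := by positivity
  set η : ℝ := ε/4 with hηdef
  set S : Set X := Eset η a with hSdef
  have hSnm : ¬ IsMeagre S := hnonmeagre η hη4 a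
  have hDSnm : ¬ IsMeagre (baireD S) := by
    intro h
    refine hSnm (((isMeagre_diff_baireD S).union' h).mono ?_)
    intro x hx
    by_cases hb : x ∈ baireD S
    · exact Or.inr hb
    · exact Or.inl ⟨hx, hb⟩
  set U : Set X := interior (baireD S) with hUdef
  have hUnm : ¬ IsMeagre U := by
    intro h
    refine hDSnm (((isMeagre_diff_interior (isClosed_baireD S)).union' h).mono ?_)
    intro x hx
    by_cases hi : x ∈ U
    · exact Or.inr hi
    · exact Or.inl ⟨hx, hi⟩
  have hUS : IsMeagre (U \ S) := by
    refine (hBP η a).mono ?_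
    intro x hx
    exact ⟨interior_subset hx.1, hx.2⟩
  have hUSne : (S ∩ U).Nonempty := by
    by_contra hcon
    rw [not_nonempty_iff_eq_empty] at hcon
    refine hUnm (hUS.mono ?_)
    intro x hx
    refine ⟨hx, fun hxS => ?_⟩
    have : x ∈ S ∩ U := ⟨hxS, hx⟩
    rw [hcon] at this
    exact this
  obtain ⟨s₀, hs₀S, hs₀U⟩ := hUSne
  obtain ⟨v₀, hv₀m, hv₀a⟩ := hs₀S
  obtain ⟨VW, hVWopen, hVWeq⟩ := hemb.isOpen_iff.1 (isOpen_interior (s := baireD S))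
  have hjs₀ : j s₀ ∈ VW := by
    rw [hUdef, ← hVWeq] at hs₀U
    exact hs₀U
  obtain ⟨r, hrpos, hball⟩ := Metric.isOpen_iff.1 hVWopen _ hjs₀
  have hc := ((E v₀).continuous.continuousAt (x := j a))
  rw [Metric.continuousAt_iff] at hc
  obtain ⟨δ, hδpos, hδ⟩ := hc (r/2) (by positivity)
  refine ⟨δ, hδpos, ?_⟩
  intro x hx
  have hx' : dist (j (v₀ x)) (j s₀) < r/2 := by
    have h1 := hδ hx
    rwa [hE v₀ x, hE v₀ a, hv₀a] at h1
  set η' : ℝ := min η (r/2) with hη'def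
  have hη'pos : 0 < η' := lt_min hη4 (by positivity)
  set T : Set X := Eset η' (v₀ x) with hTdef
  have hTU : T ⊆ U := by
    rintro _ ⟨t, htm, rfl⟩
    have h1 : dist (j (t (v₀ x))) (j (v₀ x)) ≤ η' := by
      rw [← hE t (v₀ x)]
      exact htm _
    have h2 : dist (j (t (v₀ x))) (j s₀) < r := by
      calc dist (j (t (v₀ x))) (j s₀) ≤ dist (j (t (v₀ x))) (j (v₀ x)) + dist (j (v₀ x)) (j s₀) :=
            dist_triangle _ _ _
      _ < η' + r/2 := by
            exact add_lt_add_of_le_of_lt h1 hx'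
      _ ≤ r/2 + r/2 := by
            have : η' ≤ r/2 := min_le_right _ _
            linarith
      _ = r := by ring
    have h3 : j (t (v₀ x)) ∈ VW := hball (Metric.mem_ball.2 h2)
    rw [hUdef, ← hVWeq]
    exact h3
  have hTnm : ¬ IsMeagre T := hnonmeagre η' hη'pos (v₀ x)
  have hTS : (T ∩ S).Nonempty := by
    by_contra hcon
    rw [not_nonempty_iff_eq_empty] at hcon
    refine hTnm (hUS.mono ?_)
    intro w hw
    refine ⟨hTU hw, fun hwS => ?_⟩
    have : w ∈ T ∩ S := ⟨hw, hwS⟩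
    rw [hcon] at this
    exact this
  obtain ⟨w, hwT, hwS⟩ := hTS
  obtain ⟨t, htm, htw⟩ := hwT
  obtain ⟨v, hvm, hvw⟩ := hwS
  refine ⟨v.trans (t.symm.trans v₀.symm), ?_, ?_⟩
  · show v₀.symm (t.symm (v a)) = x
    rw [hvw, ← htw, Homeomorph.symm_apply_apply, Homeomorph.symm_apply_apply]
  · intro y
    show dist (j (v₀.symm (t.symm (v y)))) (j y) < ε
    have m1 : dist (j (v₀.symm (t.symm (v y)))) (j (t.symm (v y))) ≤ η := by
      rw [← hE v₀.symm (t.symm (v y))]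
      exact hMvSymm v₀ η hv₀m _
    have m2 : dist (j (t.symm (v y))) (j (v y)) ≤ η' := by
      rw [← hE t.symm (v y)]
      exact hMvSymm t η' htm _
    have m3 : dist (j (v y)) (j y) ≤ η := by
      rw [← hE v y]
      exact hvm _
    have hη'η : η' ≤ η := min_le_left _ _
    calc dist (j (v₀.symm (t.symm (v y)))) (j y)
        ≤ dist (j (v₀.symm (t.symm (v y)))) (j (t.symm (v y))) +
          dist (j (t.symm (v y))) (j (v y)) + dist (j (v y)) (j y) := dist_triangle4 _ _ _ _
    _ ≤ η + η' + η := by linarith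
    _ ≤ η + η + η := by linarith
    _ < ε := by rw [hηdef]; linarith

/-- Effros' theorem for locally compact spaces (Theorem 2.2 of the paper):
If `X` is a homogeneous locally compact separable metric space and `ρ` is a metric
on the one-point compactification of `X` compatible with its topology, then for every
`a ∈ X` and `ε > 0` there is `δ > 0` such that every `x` with `ρ(x,a) < δ` is the image
of `a` under a self-homeomorphism of `X` moving every point by less than `ε`
(distances measured in `ρ`). -/
theorem effros_locally_compact
    (X : Type*) [MetricSpace X] [TopologicalSpace.SeparableSpace X]
    [LocallyCompactSpace X]
    (hhom : ∀ x y : X, ∃ h : X ≃ₜ X, h x = y)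
    (ρ : MetricSpace (OnePoint X))
    (hρ : ρ.toUniformSpace.toTopologicalSpace
        = (inferInstance : TopologicalSpace (OnePoint X)))
    (a : X) (ε : ℝ) (hε : 0 < ε) :
    ∃ δ > 0, ∀ x : X,
      @dist (OnePoint X) ρ.toDist (x : OnePoint X) (a : OnePoint X) < δ →
        ∃ h : X ≃ₜ X, h a = x ∧
          ∀ y : X,
            @dist (OnePoint X) ρ.toDist ((h y : X) : OnePoint X) (y : OnePoint X) < ε := by
  classical
  letI m : MetricSpace (OnePoint X) := ρ.replaceTopology hρ.symm
  have hm : m = ρ := MetricSpace.replaceTopology_eq ρ hρ.symm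
  haveI : Nonempty X := ⟨a⟩
  haveI : SecondCountableTopology X := UniformSpace.secondCountable_of_separable X
  haveI : TopologicalSpace.SeparableSpace (OnePoint X) := by
    obtain ⟨D, hDc, hDd⟩ := TopologicalSpace.exists_countable_dense X
    refine ⟨⟨(fun x : X => (x : OnePoint X)) '' D ∪ {∞},
      (hDc.image _).union (countable_singleton _), ?_⟩⟩
    rw [dense_iff_closure_eq, eq_univ_iff_forall]
    intro w
    induction w using OnePoint.rec with
    | infty => exact subset_closure (Or.inr rfl)
    | coe x =>
      have hx : x ∈ closure D := hDd.closure_eq ▸ mem_univ x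
      have h1 : (x : OnePoint X) ∈ (fun x : X => (x : OnePoint X)) '' closure D := ⟨x, hx, rfl⟩
      have h2 := image_closure_subset_closure_image
        (f := fun x : X => (x : OnePoint X)) (s := D) OnePoint.continuous_coe
      exact closure_mono subset_union_left (h2 h1)
  haveI : SecondCountableTopology (OnePoint X) :=
    UniformSpace.secondCountable_of_separable (OnePoint X)
  have hpt : ∞ ∉ Set.range (fun x : X => (x : OnePoint X)) := by
    rintro ⟨x, hx⟩
    exact OnePoint.coe_ne_infty x hx
  have hcover : ∀ w : OnePoint X, w = ∞ ∨ w ∈ Set.range (fun x : X => (x : OnePoint X)) := by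
    intro w
    induction w using OnePoint.rec with
    | infty => exact Or.inl rfl
    | coe x => exact Or.inr ⟨x, rfl⟩
  have hE : ∀ (h : X ≃ₜ X) (x : X), h.onePointCongr (x : OnePoint X) = ((h x : X) : OnePoint X) :=
    fun h x => by simp
  have hEpt : ∀ h : X ≃ₜ X, h.onePointCongr ∞ = ∞ := fun h => by simp
  obtain ⟨δ, hδpos, hδ⟩ := effros_aux (W := OnePoint X) (X := X) ∞
    (fun x : X => (x : OnePoint X)) OnePoint.isOpenEmbedding_coe.isInducing
    (fun x y hxy => by simpa using hxy) hpt hcover (fun h => h.onePointCongr) hE hEpt hhom a ε hε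
  refine ⟨δ, hδpos, ?_⟩
  intro x hx
  have hx' : @dist (OnePoint X) m.toDist (x : OnePoint X) (a : OnePoint X) < δ := by
    rw [hm]; exact hx
  obtain ⟨h, hha, hmove⟩ := hδ x hx'
  refine ⟨h, hha, fun y => ?_⟩
  have := hmove y
  rwa [hm] at this
end

section
/- Let X be a connected and locally connected, locally compact separable metric space, and let {K_α : α ∈ Λ} be an uncountable collection of pairwise disjoint continua (nonempty compact connected subsets) in X such that for each α the complement X \ K_α has more than one connected component. Then there exists α₀ ∈ Λ such that X \ K_{α₀} has exactly two connected components. -/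
open Set

/-- A nontrivial type whose `Nat.card` is not 2 has three distinct elements. -/
lemma exists_three_distinct {T : Type*} [Nontrivial T] (h : Nat.card T ≠ 2) :
    ∃ a b c : T, a ≠ b ∧ a ≠ c ∧ b ≠ c := by
  obtain ⟨a, b, hab⟩ := exists_pair_ne T
  by_contra hc
  push_neg at hc
  apply h
  rw [Nat.card_eq_two_iff]
  refine ⟨a, b, hab, ?_⟩
  ext c
  simp only [Set.mem_insert_iff, Set.mem_singleton_iff, Set.mem_univ, iff_true]
  by_contra hcc
  push_neg at hcc
  exact hcc.2 (hc a b c hab (Ne.symm hcc.1)).symm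

/-- Distinct connected components (in a set) are disjoint. -/
lemma disjoint_of_ne_connectedComponentIn {X : Type*} [TopologicalSpace X] {F : Set X} {a b : X}
    (h : connectedComponentIn F a ≠ connectedComponentIn F b) :
    Disjoint (connectedComponentIn F a) (connectedComponentIn F b) := by
  rw [Set.disjoint_left]
  intro z hza hzb
  exact h ((connectedComponentIn_eq hza).trans (connectedComponentIn_eq hzb).symm)

/-- In a connected, locally connected space, the union of a closed connected nonempty set `A`
with any connected component of its complement is preconnected. -/
lemma isPreconnected_union_connectedComponentIn_compl {X : Type*} [TopologicalSpace X]
    [ConnectedSpace X] [LocallyConnectedSpace X] {A : Set X} (hA : IsClosed A)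
    (hAc : IsPreconnected A) (hAne : A.Nonempty) {x : X} (hx : x ∈ Aᶜ) :
    IsPreconnected (A ∪ connectedComponentIn Aᶜ x) := by
  set C := connectedComponentIn Aᶜ x with hC
  have hsub : closure C ⊆ C ∪ A := by
    intro y hy
    by_cases hyA : y ∈ A
    · exact Or.inr hyA
    · left
      have h1 : connectedComponentIn Aᶜ y ∈ nhds y :=
        connectedComponentIn_mem_nhds (hA.isOpen_compl.mem_nhds hyA)
      obtain ⟨z, hz1, hz2⟩ := mem_closure_iff_nhds.mp hy _ h1
      have e1 : connectedComponentIn Aᶜ y = connectedComponentIn Aᶜ z :=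
        connectedComponentIn_eq hz1
      have e2 : connectedComponentIn Aᶜ x = connectedComponentIn Aᶜ z :=
        connectedComponentIn_eq hz2
      have : y ∈ connectedComponentIn Aᶜ y := mem_connectedComponentIn hyA
      rw [e1, ← e2] at this
      exact this
  have hne : (closure C ∩ A).Nonempty := by
    by_contra h
    rw [Set.not_nonempty_iff_eq_empty] at h
    have hCc : IsClosed C := by
      apply isClosed_of_closure_subset
      intro y hy
      rcases hsub hy with h' | h'
      · exact h'
      · exact absurd (Set.mem_inter hy h') (by rw [h]; exact Set.notMem_empty y)
    have hCo : IsOpen C := hA.isOpen_compl.connectedComponentIn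
    have hCne : C.Nonempty := ⟨x, mem_connectedComponentIn hx⟩
    rcases isClopen_iff.mp ⟨hCc, hCo⟩ with h' | h'
    · exact hCne.ne_empty h'
    · obtain ⟨a, ha⟩ := hAne
      have : a ∈ C := h' ▸ Set.mem_univ a
      exact (connectedComponentIn_subset Aᶜ x this) ha
  obtain ⟨p, hp1, hp2⟩ := hne
  have h1 : IsPreconnected (A ∪ closure C) :=
    hAc.union p hp2 hp1 isPreconnected_connectedComponentIn.closure
  have heq : A ∪ closure C = A ∪ C := by
    apply Set.Subset.antisymm
    · rintro y (h' | h')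
      · exact Or.inl h'
      · rcases hsub h' with h'' | h''
        · exact Or.inr h''
        · exact Or.inl h''
    · exact Set.union_subset_union_right A subset_closure
  rwa [heq] at h1

/-- If the components of `u` and `v` in `Aᶜ` both miss `B`, and `A` is a closed connected
nonempty set disjoint from `B`, then `u` and `v` are in the same component of `Bᶜ`. -/
lemma connectedComponentIn_compl_eq_of_disjoint {X : Type*} [TopologicalSpace X]
    [ConnectedSpace X] [LocallyConnectedSpace X] {A B : Set X} (hA : IsClosed A)
    (hAc : IsPreconnected A) (hAne : A.Nonempty) (hAB : Disjoint A B) {u v : X}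
    (hu : u ∈ Aᶜ) (hv : v ∈ Aᶜ)
    (huB : Disjoint (connectedComponentIn Aᶜ u) B)
    (hvB : Disjoint (connectedComponentIn Aᶜ v) B) :
    connectedComponentIn Bᶜ u = connectedComponentIn Bᶜ v := by
  obtain ⟨q, hq⟩ := hAne
  set S := (A ∪ connectedComponentIn Aᶜ u) ∪ (A ∪ connectedComponentIn Aᶜ v) with hS
  have h3 : IsPreconnected S :=
    IsPreconnected.union q (Or.inl hq) (Or.inl hq)
      (isPreconnected_union_connectedComponentIn_compl hA hAc ⟨q, hq⟩ hu)
      (isPreconnected_union_connectedComponentIn_compl hA hAc ⟨q, hq⟩ hv)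
  have hsub : S ⊆ Bᶜ := by
    rintro y ((h | h) | (h | h))
    · exact Set.disjoint_left.mp hAB h
    · exact Set.disjoint_left.mp huB h
    · exact Set.disjoint_left.mp hAB h
    · exact Set.disjoint_left.mp hvB h
  have hu' : u ∈ S := Or.inl (Or.inr (mem_connectedComponentIn hu))
  have hv' : v ∈ S := Or.inr (Or.inr (mem_connectedComponentIn hv))
  have := h3.subset_connectedComponentIn hu' hsub
  exact connectedComponentIn_eq (this hv')

/-- Lemma 3.1 of the paper: in a connected, locally connected, locally compact
separable metric space, given an uncountable family of pairwise disjoint continua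
each of whose complements has more than one connected component, some member of the
family has a complement with exactly two connected components. -/
theorem uncountable_family_of_continua_exists_complement_with_two_components
    (X : Type*) [MetricSpace X] [TopologicalSpace.SeparableSpace X]
    [LocallyCompactSpace X] [ConnectedSpace X] [LocallyConnectedSpace X]
    (Λ : Type*) [Uncountable Λ]
    (K : Λ → Set X)
    (hcont : ∀ α, IsCompact (K α) ∧ IsConnected (K α))
    (hdisj : Pairwise (Function.onFun Disjoint K))
    (hmany : ∀ α, Nontrivial (ConnectedComponents ((K α)ᶜ : Set X))) :
    ∃ α₀, Nat.card (ConnectedComponents ((K α₀)ᶜ : Set X)) = 2 := by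
  by_contra hno
  push_neg at hno
  obtain ⟨s, hs_count, hs_dense⟩ := TopologicalSpace.exists_countable_dense X
  -- for each α, choose three dense points in three distinct components of (K α)ᶜ
  have key : ∀ α : Λ, ∃ d1 d2 d3 : X, d1 ∈ s ∧ d2 ∈ s ∧ d3 ∈ s ∧
      d1 ∈ (K α)ᶜ ∧ d2 ∈ (K α)ᶜ ∧ d3 ∈ (K α)ᶜ ∧
      connectedComponentIn (K α)ᶜ d1 ≠ connectedComponentIn (K α)ᶜ d2 ∧
      connectedComponentIn (K α)ᶜ d1 ≠ connectedComponentIn (K α)ᶜ d3 ∧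
      connectedComponentIn (K α)ᶜ d2 ≠ connectedComponentIn (K α)ᶜ d3 := by
    intro α
    haveI := hmany α
    obtain ⟨a, b, c, hab, hac, hbc⟩ := exists_three_distinct (hno α)
    obtain ⟨xa, rfl⟩ := ConnectedComponents.surjective_coe a
    obtain ⟨xb, rfl⟩ := ConnectedComponents.surjective_coe b
    obtain ⟨xc, rfl⟩ := ConnectedComponents.surjective_coe c
    have himg : ∀ y : ((K α)ᶜ : Set X), connectedComponentIn (K α)ᶜ (y : X)
        = Subtype.val '' connectedComponent y := by
      intro y
      rw [connectedComponentIn_eq_image y.2, Subtype.eta]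
    have hdiff : ∀ y z : ((K α)ᶜ : Set X),
        (ConnectedComponents.mk y : ConnectedComponents ((K α)ᶜ : Set X)) ≠ ConnectedComponents.mk z →
        connectedComponentIn (K α)ᶜ (y : X) ≠ connectedComponentIn (K α)ᶜ (z : X) := by
      intro y z hyz h
      apply hyz
      rw [ConnectedComponents.coe_eq_coe]
      rw [himg y, himg z] at h
      exact Set.image_injective.mpr Subtype.val_injective h
    -- pick dense points in each component
    have hpick : ∀ y : ((K α)ᶜ : Set X), ∃ d ∈ s,
        d ∈ connectedComponentIn (K α)ᶜ (y : X) := by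
      intro y
      have hopen : IsOpen (connectedComponentIn (K α)ᶜ (y : X)) :=
        ((hcont α).1.isClosed).isOpen_compl.connectedComponentIn
      exact hs_dense.exists_mem_open hopen ⟨y, mem_connectedComponentIn y.2⟩
    obtain ⟨da, hda, hda'⟩ := hpick xa
    obtain ⟨db, hdb, hdb'⟩ := hpick xb
    obtain ⟨dc, hdc, hdc'⟩ := hpick xc
    have ea := connectedComponentIn_eq hda'
    have eb := connectedComponentIn_eq hdb'
    have ec := connectedComponentIn_eq hdc'
    refine ⟨da, db, dc, hda, hdb, hdc,
      connectedComponentIn_subset _ _ hda', connectedComponentIn_subset _ _ hdb',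
      connectedComponentIn_subset _ _ hdc', ?_, ?_, ?_⟩
    · rw [← ea, ← eb]; exact hdiff xa xb hab
    · rw [← ea, ← ec]; exact hdiff xa xc hac
    · rw [← eb, ← ec]; exact hdiff xb xc hbc
  choose d1 d2 d3 hs1 hs2 hs3 hm1 hm2 hm3 h12 h13 h23 using key
  haveI : Countable s := hs_count.to_subtype
  -- the assignment α ↦ (d1 α, d2 α, d3 α) is injective
  have hinj : Function.Injective (fun α : Λ =>
      ((⟨d1 α, hs1 α⟩ : s), (⟨d2 α, hs2 α⟩ : s), (⟨d3 α, hs3 α⟩ : s))) := by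
    intro α β h
    by_contra hne
    simp only [Prod.mk.injEq, Subtype.mk.injEq] at h
    obtain ⟨e1, e2, e3⟩ := h
    -- K β lies in one component of (K α)ᶜ
    have hKβdisj : Disjoint (K α) (K β) := hdisj hne
    obtain ⟨p, hp⟩ := (hcont β).2.nonempty
    have hpα : p ∈ (K α)ᶜ := Set.disjoint_right.mp hKβdisj hp
    have hKβsub : K β ⊆ connectedComponentIn (K α)ᶜ p :=
      (hcont β).2.isPreconnected.subset_connectedComponentIn hp
        (Set.subset_compl_iff_disjoint_left.mpr hKβdisj)
    set P := connectedComponentIn (K α)ᶜ p with hP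
    -- helper: if a component differs from P it misses K β
    have hmiss : ∀ x : X, x ∈ (K α)ᶜ → connectedComponentIn (K α)ᶜ x ≠ P →
        Disjoint (connectedComponentIn (K α)ᶜ x) (K β) := by
      intro x _ hxP
      exact (disjoint_of_ne_connectedComponentIn hxP).mono_right hKβsub
    -- derive the contradiction for a chosen pair (u, v)
    have hcore : ∀ u v : X, u ∈ (K α)ᶜ → v ∈ (K α)ᶜ →
        connectedComponentIn (K α)ᶜ u ≠ P → connectedComponentIn (K α)ᶜ v ≠ P →
        connectedComponentIn (K β)ᶜ u = connectedComponentIn (K β)ᶜ v := by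
      intro u v hu hv huP hvP
      exact connectedComponentIn_compl_eq_of_disjoint (hcont α).1.isClosed
        (hcont α).2.isPreconnected (hcont α).2.nonempty hKβdisj hu hv
        (hmiss u hu huP) (hmiss v hv hvP)
    by_cases hc1 : connectedComponentIn (K α)ᶜ (d1 α) = P
    · -- components of d2, d3 differ from P
      have hd2P : connectedComponentIn (K α)ᶜ (d2 α) ≠ P := fun h' => h12 α (hc1.trans h'.symm)
      have hd3P : connectedComponentIn (K α)ᶜ (d3 α) ≠ P := fun h' => h13 α (hc1.trans h'.symm)
      have := hcore (d2 α) (d3 α) (hm2 α) (hm3 α) hd2P hd3P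
      rw [e2, e3] at this
      exact h23 β this
    · by_cases hc2 : connectedComponentIn (K α)ᶜ (d2 α) = P
      · have hd3P : connectedComponentIn (K α)ᶜ (d3 α) ≠ P := fun h' => h23 α (hc2.trans h'.symm)
        have := hcore (d1 α) (d3 α) (hm1 α) (hm3 α) hc1 hd3P
        rw [e1, e3] at this
        exact h13 β this
      · have := hcore (d1 α) (d2 α) (hm1 α) (hm2 α) hc1 hc2
        rw [e1, e2] at this
        exact h12 β this
  haveI : Countable Λ := Function.Injective.countable hinj
  exact not_uncountable ‹Uncountable Λ›
end
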